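/- Let K and L be essentially small tt-categories with K rigid, let F : K → L be a tt-functor and φ = Spc(F) the induced map. For every object x ∈ K choose a distinguished triangle w_x →ξ_x→ 𝟙 →η_x→ x^∨ ⊗ x → Σw_x over the coevaluation η_x. Let P ∈ Spc(K) be a prime satisfying: for all x ∈ P, all s ∈ K \ P and all n ≥ 1, one has F(ξ_x^⊗n ⊗ s) ≠ 0. Then P belongs to the image of φ, i.e. there exists Q ∈ Spc(L) with F⁻¹(Q) = P. -/

import Mathlib

/-!
Basic notions of tensor-triangular geometry (Balmer), formalized from scratch:
tt-categories (pretriangulated + monoidal, with tensor exact in each variable),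
tt-ideals, prime tt-ideals, the Balmer spectrum `Spc` with its topology,
tensor powers of objects and morphisms, rigidity.
-/

open CategoryTheory Category Limits ZeroObject Pretriangulated MonoidalCategory

universe v u v' u'

namespace TT

variable (K : Type u) [Category.{v} K] [HasZeroObject K] [Preadditive K]
  [HasShift K ℤ] [∀ n : ℤ, (shiftFunctor K n).Additive] [Pretriangulated K]
  [MonoidalCategory K]

/-- The tensor is exact (triangulated) in each variable: tensoring a distinguished
triangle with an object (on either side) again yields a distinguished triangle. -/
def TensorExact : Prop :=
  ∀ (x : K) (T : Triangle K), (T ∈ distTriang K) →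
    (∃ h : x ⊗ T.obj₃ ⟶ (x ⊗ T.obj₁)⟦(1:ℤ)⟧,
      Triangle.mk (x ◁ T.mor₁) (x ◁ T.mor₂) h ∈ distTriang K) ∧
    (∃ h : T.obj₃ ⊗ x ⟶ (T.obj₁ ⊗ x)⟦(1:ℤ)⟧,
      Triangle.mk (T.mor₁ ▷ x) (T.mor₂ ▷ x) h ∈ distTriang K)

/-- Rigidity: every object `x` has a dual `x^∨`, i.e. takes part in an exact pairing
(coevaluation `η : 𝟙 ⟶ x^∨ ⊗ x` and evaluation `ε : x ⊗ x^∨ ⟶ 𝟙` satisfying the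
triangle identities, which yield the adjunction `x ⊗ - ⊣ x^∨ ⊗ -`). -/
def Rigid : Prop := ∀ x : K, ∃ xd : K, Nonempty (ExactPairing xd x)

variable {K}

/-- A tt-ideal: a (full, replete) class of objects closed under shifts, cones,
direct summands (retracts) and tensoring with arbitrary objects. -/
structure IsTTIdeal (I : Set K) : Prop where
  zero_mem : (0 : K) ∈ I
  shift_mem : ∀ (n : ℤ), ∀ x ∈ I, (x⟦n⟧ : K) ∈ I
  cone_mem : ∀ T : Triangle K, (T ∈ distTriang K) → T.obj₁ ∈ I → T.obj₂ ∈ I → T.obj₃ ∈ I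
  retract_mem : ∀ x z : K, z ∈ I → ∀ (i : x ⟶ z) (r : z ⟶ x), i ≫ r = 𝟙 x → x ∈ I
  tensor_mem : ∀ x ∈ I, ∀ y : K, x ⊗ y ∈ I
  tensor_mem' : ∀ x ∈ I, ∀ y : K, y ⊗ x ∈ I

/-- A prime tt-ideal: a proper tt-ideal `P` such that `x ⊗ y ∈ P` implies
`x ∈ P` or `y ∈ P`. -/
structure IsPrimeTTIdeal (P : Set K) extends IsTTIdeal P : Prop where
  ne_univ : P ≠ Set.univ
  mem_or_mem : ∀ x y : K, x ⊗ y ∈ P → x ∈ P ∨ y ∈ P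

variable (K) in
/-- The Balmer spectrum: the set of prime tt-ideals. -/
def Spc := {P : Set K // IsPrimeTTIdeal P}

/-- The Balmer topology on `Spc K`, generated by the basic open subsets
`U(x) = {P ∈ Spc K | x ∈ P}`. -/
instance : TopologicalSpace (Spc K) :=
  TopologicalSpace.generateFrom {U | ∃ x : K, U = {P : Spc K | x ∈ P.1}}

/-- The tt-ideal `⟨E⟩` generated by a class of objects `E`. -/
def ttIdealGen (E : Set K) : Set K := ⋂₀ {I : Set K | IsTTIdeal I ∧ E ⊆ I}

/-- `n`-fold tensor power of an object (`x^⊗0 = 𝟙`). -/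
def opow (x : K) : ℕ → K
  | 0 => 𝟙_ K
  | n + 1 => opow x n ⊗ x

/-- `n`-fold tensor power `f^⊗n` of a morphism. -/
def mpow {x y : K} (f : x ⟶ y) : ∀ n : ℕ, (opow x n ⟶ opow y n)
  | 0 => 𝟙 _
  | n + 1 => mpow f n ⊗ₘ f

end TT

open TT

/-!
For `x ∈ P`, the triangle identity makes `x ◁ η_x` a split monomorphism; since `ξ_x ≫ η_x = 0`
this forces `x ◁ ξ_x = 0`, hence `F(ξ_x) ▷ F(x) = 0`. The objects on which a fixed morphism is
`⊗`-nilpotent form a tt-ideal of `L`, and every object of `⟨F(P)⟩` lies in `⟨F(x)⟩` for a single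
`x ∈ P` (take direct sums of generators). So if some `F(s)` with `s ∉ P` were in `⟨F(P)⟩`, some
`F(ξ_x)^⊗n ▷ F(s)` would vanish, contrary to the hypothesis. Thus `⟨F(P)⟩` misses the
`⊗`-multiplicative class of objects isomorphic to some `F(s)`, `s ∉ P`, and a tt-ideal maximal
among those containing `⟨F(P)⟩` and missing this class is a prime `Q` with `F⁻¹(Q) = P`.
-/

namespace TT

section Monoidal

variable {D : Type*} [Category D] [MonoidalCategory D]

lemma mpow_one {x y : D} (f : x ⟶ y) : mpow f 1 = (λ_ x).hom ≫ f ≫ (λ_ y).inv := by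
  change 𝟙 (𝟙_ D) ⊗ₘ f = _
  rw [id_tensorHom, leftUnitor_inv_naturality, Iso.hom_inv_id_assoc]

lemma mpow_add_factor {x y : D} (f : x ⟶ y) (n m : ℕ) :
    ∃ (pre : opow x (n + m) ⟶ opow x n ⊗ opow x m)
      (post : opow y n ⊗ opow y m ⟶ opow y (n + m)),
      mpow f (n + m) = pre ≫ (mpow f n ⊗ₘ mpow f m) ≫ post := by
  induction m with
  | zero =>
    refine ⟨(ρ_ _).inv, (ρ_ _).hom, ?_⟩
    change mpow f n = (ρ_ (opow x n)).inv ≫ (mpow f n ⊗ₘ 𝟙 (𝟙_ D)) ≫ (ρ_ (opow y n)).hom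
    rw [tensorHom_id, rightUnitor_naturality, Iso.inv_hom_id_assoc]
  | succ m ih =>
    obtain ⟨pre, post, h⟩ := ih
    refine ⟨(pre ▷ x ≫ (α_ _ _ _).hom : opow x (n + m) ⊗ x ⟶ _),
      ((α_ _ _ _).inv ≫ post ▷ y : _ ⟶ opow y (n + m) ⊗ y), ?_⟩
    change mpow f (n + m) ⊗ₘ f = _ ≫ (mpow f n ⊗ₘ (mpow f m ⊗ₘ f)) ≫ _
    rw [h, assoc, ← associator_naturality_assoc, Iso.hom_inv_id_assoc]
    simp only [MonoidalCategory.tensorHom_def, comp_whiskerRight, assoc, whisker_exchange]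

lemma whiskerLeft_coevaluation_comp_retraction {c c' : D} {η : 𝟙_ D ⟶ c' ⊗ c}
    {ε : c ⊗ c' ⟶ 𝟙_ D} (hpair : c ◁ η ≫ (α_ c c' c).inv ≫ ε ▷ c = (ρ_ c).hom ≫ (λ_ c).inv) :
    c ◁ η ≫ (α_ c c' c).inv ≫ ε ▷ c ≫ (λ_ c).hom ≫ (ρ_ c).inv = 𝟙 _ := by
  simp [reassoc_of% hpair]

variable [Preadditive D]

lemma whiskerRight_eq_zero_of_retract {A B z w : D} (f : A ⟶ B) (i : z ⟶ w) (r : w ⟶ z)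
    (hir : i ≫ r = 𝟙 z) (hw : f ▷ w = 0) : f ▷ z = 0 := by
  have h : f ▷ z ≫ B ◁ i ≫ B ◁ r = 0 := by
    rw [← whisker_exchange_assoc, hw, zero_comp, comp_zero]
  rwa [← MonoidalCategory.whiskerLeft_comp, hir, MonoidalCategory.whiskerLeft_id,
    comp_id] at h

lemma whiskerRight_eq_zero_of_iso {A B z w : D} (f : A ⟶ B) (e : z ≅ w) (hw : f ▷ w = 0) :
    f ▷ z = 0 :=
  whiskerRight_eq_zero_of_retract f e.hom e.inv e.hom_inv_id hw

lemma whiskerRight_eq_zero_of_factor {A B A' B' y : D} {f : A ⟶ B} {g : A' ⟶ B'}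
    (pre : A' ⟶ A) (post : B ⟶ B') (hg : g = pre ≫ f ≫ post) (hf : f ▷ y = 0) :
    g ▷ y = 0 := by
  rw [hg, comp_whiskerRight, comp_whiskerRight, hf, zero_comp, comp_zero]

def nilpotenceIdeal {A B : D} (f : A ⟶ B) : Set D := {y | ∃ n, mpow f (n + 1) ▷ y = 0}

lemma mem_nilpotenceIdeal_of_whiskerRight_eq_zero {A B y : D} {f : A ⟶ B} (hf : f ▷ y = 0) :
    y ∈ nilpotenceIdeal f :=
  ⟨0, whiskerRight_eq_zero_of_factor _ _ (mpow_one f) hf⟩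

end Monoidal

section MonoidalFunctor

open Functor.LaxMonoidal Functor.OplaxMonoidal

variable {C D : Type*} [Category C] [MonoidalCategory C] [Category D] [MonoidalCategory D]
  (F : C ⥤ D) [F.Monoidal]

def opowIso (x : C) : (n : ℕ) → (F.obj (opow x n) ≅ opow (F.obj x) n)
  | 0 => (Functor.Monoidal.εIso F).symm
  | n + 1 => (Functor.Monoidal.μIso F _ _).symm ≪≫ whiskerRightIso (opowIso x n) (F.obj x)

lemma map_mpow {x y : C} (f : x ⟶ y) (n : ℕ) :
    F.map (mpow f n) = (opowIso F x n).hom ≫ mpow (F.map f) n ≫ (opowIso F y n).inv := by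
  induction n with
  | zero =>
    change F.map (𝟙 (𝟙_ C)) = η F ≫ 𝟙 (𝟙_ D) ≫ ε F
    simp
  | succ n ih =>
    change F.map (mpow f n ⊗ₘ f) = (δ F _ _ ≫ (opowIso F x n).hom ▷ F.obj x) ≫
      (mpow (F.map f) n ⊗ₘ F.map f) ≫ ((opowIso F y n).inv ▷ F.obj y ≫ μ F _ _)
    rw [Functor.Monoidal.map_tensor, ih]
    simp only [MonoidalCategory.tensorHom_def, comp_whiskerRight, assoc]
    rw [whisker_exchange_assoc]

lemma whiskerLeft_map_retraction {X Y Z : C} {g : Y ⟶ Z} {r : X ⊗ Z ⟶ X ⊗ Y}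
    (h : X ◁ g ≫ r = 𝟙 _) : F.obj X ◁ F.map g ≫ μ F X Z ≫ F.map r ≫ δ F X Y = 𝟙 _ := by
  have hF := congrArg F.map h
  simp only [F.map_comp, Functor.Monoidal.map_whiskerLeft, F.map_id, assoc] at hF
  rw [← cancel_epi (δ F X Y), reassoc_of% hF, comp_id]

lemma map_whiskerRight_mpow_eq_zero [Preadditive D] {x y : C} (f : x ⟶ y) (n : ℕ) (s : C)
    (h : mpow (F.map f) n ▷ F.obj s = 0) : F.map (mpow f n ▷ s) = 0 := by
  rw [Functor.Monoidal.map_whiskerRight,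
    whiskerRight_eq_zero_of_factor _ _ (map_mpow F f n) h, zero_comp, comp_zero]

end MonoidalFunctor

section Pretriangulated

variable {D : Type*} [Category D] [HasZeroObject D] [Preadditive D]
  [HasShift D ℤ] [∀ n : ℤ, (shiftFunctor D n).Additive] [Pretriangulated D]
  [MonoidalCategory D]

lemma whiskerLeft_mor₁_eq_zero (hD : TensorExact D) {T : Triangle D} (hT : T ∈ distTriang D)
    (X : D) (r : X ⊗ T.obj₃ ⟶ X ⊗ T.obj₂) (hr : X ◁ T.mor₂ ≫ r = 𝟙 _) : X ◁ T.mor₁ = 0 := by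
  obtain ⟨h, hd⟩ := (hD X T hT).1
  have h₁₂ : X ◁ T.mor₁ ≫ X ◁ T.mor₂ = 0 := comp_distTriang_mor_zero₁₂ _ hd
  rw [← comp_id (X ◁ T.mor₁), ← hr, ← assoc, h₁₂, zero_comp]

lemma isZero_tensor_left (hD : TensorExact D) (A : D) {Z : D} (hZ : IsZero Z) :
    IsZero (A ⊗ Z) := by
  have hT : Triangle.mk (𝟙 Z) (𝟙 Z) 0 ∈ distTriang D :=
    isomorphic_distinguished _ (contractible_distinguished Z) _
      (Triangle.isoMk _ _ (Iso.refl Z) (Iso.refl Z) hZ.isoZero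
        (hZ.eq_of_src _ _) (hZ.eq_of_src _ _) (hZ.eq_of_src _ _))
  obtain ⟨h, hd⟩ := (hD A _ hT).1
  have h0 : A ◁ 𝟙 Z ≫ A ◁ 𝟙 Z = 0 := comp_distTriang_mor_zero₁₂ _ hd
  rw [IsZero.iff_id_eq_zero]
  simpa using h0

lemma whiskerRight_eq_zero_of_isZero (hD : TensorExact D) {A B y : D} (f : A ⟶ B)
    (hy : IsZero y) : f ▷ y = 0 :=
  (isZero_tensor_left hD A hy).eq_of_src _ _

lemma tensor_shift_one_iso (hD : TensorExact D) (A y : D) :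
    Nonempty (A ⊗ y⟦(1 : ℤ)⟧ ≅ (A ⊗ y)⟦(1 : ℤ)⟧) := by
  obtain ⟨h, hd⟩ := (hD A _ (contractible_distinguished₂ y)).1
  have : IsIso h :=
    (Triangle.isZero₂_iff_isIso₃ _ hd).1 (isZero_tensor_left hD A (isZero_zero D))
  exact ⟨@asIso _ _ _ _ h this⟩

lemma tensor_shift_iso (hD : TensorExact D) (A y : D) (n : ℤ) :
    Nonempty (A ⊗ y⟦n⟧ ≅ (A ⊗ y)⟦n⟧) := by
  induction n using Int.induction_on with
  | zero =>
    exact ⟨whiskerLeftIso A ((shiftFunctorZero D ℤ).app y) ≪≫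
      ((shiftFunctorZero D ℤ).app (A ⊗ y)).symm⟩
  | succ k ih =>
    obtain ⟨e⟩ := ih
    obtain ⟨e₁⟩ := tensor_shift_one_iso hD A (y⟦(k : ℤ)⟧)
    exact ⟨whiskerLeftIso A ((shiftFunctorAdd' D (k : ℤ) 1 (k + 1) rfl).app y) ≪≫ e₁ ≪≫
      (shiftFunctor D (1 : ℤ)).mapIso e ≪≫
      ((shiftFunctorAdd' D (k : ℤ) 1 (k + 1) rfl).app (A ⊗ y)).symm⟩
  | pred k ih =>
    obtain ⟨e⟩ := ih
    obtain ⟨e₁⟩ := tensor_shift_one_iso hD A (y⟦(-k - 1 : ℤ)⟧)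
    have hk : (-k - 1 : ℤ) + 1 = -k := by omega
    exact ⟨(shiftFunctor D (1 : ℤ)).preimageIso <| e₁.symm ≪≫
      whiskerLeftIso A ((shiftFunctorAdd' D (-k - 1 : ℤ) 1 (-k) hk).app y).symm ≪≫ e ≪≫
      (shiftFunctorAdd' D (-k - 1 : ℤ) 1 (-k) hk).app (A ⊗ y)⟩

section Ideals

variable {I : Set D}

lemma IsTTIdeal.mem_of_iso (hI : IsTTIdeal I) {a b : D} (e : a ≅ b) (hb : b ∈ I) : a ∈ I :=
  hI.retract_mem a b hb e.hom e.inv e.hom_inv_id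

lemma IsTTIdeal.biprod_mem (hI : IsTTIdeal I) {a b : D} (ha : a ∈ I) (hb : b ∈ I) :
    (a ⊞ b) ∈ I :=
  hI.cone_mem _ (inv_rot_of_distTriang _ (binaryBiproductTriangle_distinguished a b))
    (hI.shift_mem _ b hb) ha

lemma IsPrimeTTIdeal.tensorUnit_notMem (hI : IsPrimeTTIdeal I) : 𝟙_ D ∉ I := fun h =>
  hI.ne_univ <| Set.eq_univ_of_forall fun a =>
    hI.mem_of_iso (λ_ a).symm (hI.tensor_mem _ h a)

lemma isTTIdeal_ttIdealGen (E : Set D) : IsTTIdeal (ttIdealGen E) where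
  zero_mem := Set.mem_sInter.2 fun _ hI => hI.1.zero_mem
  shift_mem n x hx := Set.mem_sInter.2 fun I hI => hI.1.shift_mem n x (hx I hI)
  cone_mem T hT h₁ h₂ := Set.mem_sInter.2 fun I hI => hI.1.cone_mem T hT (h₁ I hI) (h₂ I hI)
  retract_mem x z hz i r hir :=
    Set.mem_sInter.2 fun I hI => hI.1.retract_mem x z (hz I hI) i r hir
  tensor_mem x hx y := Set.mem_sInter.2 fun I hI => hI.1.tensor_mem x (hx I hI) y
  tensor_mem' x hx y := Set.mem_sInter.2 fun I hI => hI.1.tensor_mem' x (hx I hI) y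

lemma subset_ttIdealGen (E : Set D) : E ⊆ ttIdealGen E :=
  fun _ hx => Set.mem_sInter.2 fun _ hI => hI.2 hx

lemma ttIdealGen_subset {E : Set D} (hI : IsTTIdeal I) (hE : E ⊆ I) : ttIdealGen E ⊆ I :=
  fun _ hx => Set.mem_sInter.1 hx I ⟨hI, hE⟩

lemma ttIdealGen_singleton_subset_of_retract {x z : D} (i : x ⟶ z) (r : z ⟶ x)
    (hir : i ≫ r = 𝟙 x) : ttIdealGen {x} ⊆ ttIdealGen {z} :=
  ttIdealGen_subset (isTTIdeal_ttIdealGen _) <| Set.singleton_subset_iff.2 <|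
    (isTTIdeal_ttIdealGen _).retract_mem _ _ (subset_ttIdealGen _ rfl) i r hir

lemma isTTIdeal_sUnion {S : Set (Set D)} (hne : S.Nonempty) (hdir : DirectedOn (· ⊆ ·) S)
    (hS : ∀ I ∈ S, IsTTIdeal I) : IsTTIdeal (⋃₀ S) where
  zero_mem := ⟨hne.some, hne.some_mem, (hS _ hne.some_mem).zero_mem⟩
  shift_mem := by
    rintro n x ⟨J, hJ, hx⟩
    exact ⟨J, hJ, (hS J hJ).shift_mem n x hx⟩
  cone_mem := by
    rintro T hT ⟨J₁, hJ₁, h₁⟩ ⟨J₂, hJ₂, h₂⟩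
    obtain ⟨J, hJ, h₁J, h₂J⟩ := hdir J₁ hJ₁ J₂ hJ₂
    exact ⟨J, hJ, (hS J hJ).cone_mem T hT (h₁J h₁) (h₂J h₂)⟩
  retract_mem := by
    rintro x z ⟨J, hJ, hz⟩ i r hir
    exact ⟨J, hJ, (hS J hJ).retract_mem x z hz i r hir⟩
  tensor_mem := by
    rintro x ⟨J, hJ, hx⟩ y
    exact ⟨J, hJ, (hS J hJ).tensor_mem x hx y⟩
  tensor_mem' := by
    rintro x ⟨J, hJ, hx⟩ y
    exact ⟨J, hJ, (hS J hJ).tensor_mem' x hx y⟩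

lemma exists_maximal_disjoint {J S : Set D} (hJ : IsTTIdeal J) (hJS : Disjoint J S) :
    ∃ Q, J ⊆ Q ∧ Maximal (fun I => IsTTIdeal I ∧ Disjoint I S) Q :=
  zorn_subset_nonempty {I | IsTTIdeal I ∧ Disjoint I S}
    (fun c hc hchain hne => ⟨⋃₀ c,
      ⟨isTTIdeal_sUnion hne hchain.directedOn fun _ hI => (hc hI).1,
        Set.disjoint_sUnion_left.2 fun _ hI => (hc hI).2⟩,
      fun _ => Set.subset_sUnion_of_mem⟩) J ⟨hJ, hJS⟩

end Ideals

variable [BraidedCategory D]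

lemma zero_whiskerRight (hD : TensorExact D) (X Y m : D) : (0 : X ⟶ Y) ▷ m = 0 := by
  have hz : IsZero ((0 : D) ⊗ m) := (isZero_tensor_left hD m (isZero_zero D)).of_iso (β_ 0 m)
  have h0 : (0 : X ⟶ Y) = (0 : X ⟶ 0) ≫ (0 : 0 ⟶ Y) := zero_comp.symm
  rw [h0, comp_whiskerRight, hz.eq_of_tgt ((0 : X ⟶ 0) ▷ m) 0, zero_comp]

lemma whiskerRight_tensor_eq_zero (hD : TensorExact D) {A B y : D} {f : A ⟶ B}
    (hf : f ▷ y = 0) (m : D) : f ▷ (y ⊗ m) = 0 := by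
  rw [← cancel_mono (α_ B y m).inv, associator_inv_naturality_left, hf,
    zero_whiskerRight hD, comp_zero, zero_comp]

lemma whiskerRight_tensor_left_eq_zero (hD : TensorExact D) {A B y : D} {f : A ⟶ B}
    (hf : f ▷ y = 0) (m : D) : f ▷ (m ⊗ y) = 0 :=
  whiskerRight_eq_zero_of_iso f (β_ m y) (whiskerRight_tensor_eq_zero hD hf m)

lemma whiskerRight_shift_eq_zero (hD : TensorExact D) {A B y : D} {f : A ⟶ B}
    (hf : f ▷ y = 0) (n : ℤ) : f ▷ y⟦n⟧ = 0 :=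
  whiskerRight_eq_zero_of_iso f
    ((shiftFunctor D n).mapIso (ρ_ y).symm ≪≫ (tensor_shift_iso hD y (𝟙_ D) n).some.symm)
    (whiskerRight_tensor_eq_zero hD hf _)

lemma tensorHom_whiskerRight_obj₃_eq_zero (hD : TensorExact D) {T : Triangle D}
    (hT : T ∈ distTriang D) {A₁ B₁ A₂ B₂ : D} {f : A₁ ⟶ B₁} {g : A₂ ⟶ B₂}
    (hf : f ▷ T.obj₁ = 0) (hg : g ▷ T.obj₂ = 0) : (f ⊗ₘ g) ▷ T.obj₃ = 0 := by
  -- `g ▷ T.obj₃` factors through `A₂ ◁ T.mor₃`, whose target `f` annihilates.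
  obtain ⟨h, hd⟩ := (hD A₂ _ (rot_of_distTriang T hT)).1
  obtain ⟨γ, hγ⟩ : ∃ γ : A₂ ⊗ T.obj₁⟦(1 : ℤ)⟧ ⟶ B₂ ⊗ T.obj₃, g ▷ T.obj₃ = A₂ ◁ T.mor₃ ≫ γ :=
    Triangle.yoneda_exact₂ _ hd (g ▷ T.obj₃)
      (by change A₂ ◁ T.mor₂ ≫ g ▷ T.obj₃ = 0; rw [whisker_exchange, hg, zero_comp])
  have hfγ : f ▷ (A₂ ⊗ T.obj₁⟦(1 : ℤ)⟧) = 0 :=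
    whiskerRight_tensor_left_eq_zero hD (whiskerRight_shift_eq_zero hD hf 1) A₂
  calc (f ⊗ₘ g) ▷ T.obj₃
      = (α_ _ _ _).hom ≫ A₁ ◁ (g ▷ T.obj₃) ≫ f ▷ (B₂ ⊗ T.obj₃) ≫ (α_ _ _ _).inv := by
        rw [tensorHom_def', comp_whiskerRight, whisker_assoc, whiskerRight_tensor]
        simp
    _ = 0 := by
        rw [hγ, MonoidalCategory.whiskerLeft_comp, assoc, whisker_exchange_assoc, hfγ]
        simp

lemma isTTIdeal_nilpotenceIdeal (hD : TensorExact D) {A B : D} (f : A ⟶ B) :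
    IsTTIdeal (nilpotenceIdeal f) where
  zero_mem := ⟨0, whiskerRight_eq_zero_of_isZero hD _ (isZero_zero D)⟩
  shift_mem n _ := fun ⟨k, hk⟩ => ⟨k, whiskerRight_shift_eq_zero hD hk n⟩
  cone_mem := by
    rintro T hT ⟨n₁, h₁⟩ ⟨n₂, h₂⟩
    obtain ⟨pre, post, hfac⟩ := mpow_add_factor f (n₁ + 1) (n₂ + 1)
    refine ⟨n₁ + n₂ + 1, ?_⟩
    rw [show n₁ + n₂ + 1 + 1 = n₁ + 1 + (n₂ + 1) by omega]
    exact whiskerRight_eq_zero_of_factor pre post hfac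
      (tensorHom_whiskerRight_obj₃_eq_zero hD hT h₁ h₂)
  retract_mem _ _ := fun ⟨n, hn⟩ i r hir => ⟨n, whiskerRight_eq_zero_of_retract _ i r hir hn⟩
  tensor_mem _ := fun ⟨n, hn⟩ m => ⟨n, whiskerRight_tensor_eq_zero hD hn m⟩
  tensor_mem' _ := fun ⟨n, hn⟩ m => ⟨n, whiskerRight_tensor_left_eq_zero hD hn m⟩

section Ideals

variable {I : Set D}

lemma IsTTIdeal.isTTIdeal_tensor_left (hD : TensorExact D) (hI : IsTTIdeal I) (a : D) :
    IsTTIdeal {y : D | a ⊗ y ∈ I} where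
  zero_mem := hI.mem_of_iso (isZero_tensor_left hD a (isZero_zero D)).isoZero hI.zero_mem
  shift_mem n y hy := hI.mem_of_iso (tensor_shift_iso hD a y n).some (hI.shift_mem n _ hy)
  cone_mem T hT h₁ h₂ := hI.cone_mem _ (hD a T hT).1.choose_spec h₁ h₂
  retract_mem x z hz i r hir := hI.retract_mem _ _ hz (a ◁ i) (a ◁ r)
    (by rw [← MonoidalCategory.whiskerLeft_comp, hir, MonoidalCategory.whiskerLeft_id])
  tensor_mem y hy z := hI.mem_of_iso (α_ a y z).symm (hI.tensor_mem _ hy z)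
  tensor_mem' y hy z :=
    hI.mem_of_iso ((α_ a z y).symm ≪≫ whiskerRightIso (β_ a z) y ≪≫ α_ z a y)
      (hI.tensor_mem' _ hy z)

lemma tensor_mem_ttIdealGen_image2 (hD : TensorExact D) {E₁ E₂ : Set D} {y₁ y₂ : D}
    (h₁ : y₁ ∈ ttIdealGen E₁) (h₂ : y₂ ∈ ttIdealGen E₂) :
    y₁ ⊗ y₂ ∈ ttIdealGen (Set.image2 (· ⊗ ·) E₁ E₂) := by
  have hG := isTTIdeal_ttIdealGen (Set.image2 (· ⊗ ·) E₁ E₂)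
  have hE₁ : ∀ e₁ ∈ E₁, e₁ ⊗ y₂ ∈ ttIdealGen (Set.image2 (· ⊗ ·) E₁ E₂) := fun e₁ he₁ =>
    ttIdealGen_subset (hG.isTTIdeal_tensor_left hD e₁)
      (fun e₂ he₂ => subset_ttIdealGen _ (Set.mem_image2_of_mem he₁ he₂)) h₂
  have hright : IsTTIdeal {y : D | y ⊗ y₂ ∈ ttIdealGen (Set.image2 (· ⊗ ·) E₁ E₂)} := by
    convert hG.isTTIdeal_tensor_left hD y₂ using 1
    ext y
    exact ⟨fun hy => hG.mem_of_iso (β_ y₂ y) hy, fun hy => hG.mem_of_iso (β_ y y₂) hy⟩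
  exact ttIdealGen_subset hright hE₁ h₁

lemma isPrimeTTIdeal_of_maximal_disjoint (hD : TensorExact D) {S Q : Set D} (hS₁ : 𝟙_ D ∈ S)
    (hS : ∀ a ∈ S, ∀ b ∈ S, a ⊗ b ∈ S)
    (hQ : Maximal (fun I => IsTTIdeal I ∧ Disjoint I S) Q) : IsPrimeTTIdeal Q where
  toIsTTIdeal := hQ.prop.1
  ne_univ hQU := Set.disjoint_left.1 hQ.prop.2 (hQU ▸ Set.mem_univ _) hS₁
  mem_or_mem a b hab := by
    have meets : ∀ u ∉ Q, ∃ y ∈ ttIdealGen (insert u Q), y ∈ S := by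
      intro u hu
      by_contra! hdisj
      have hle : Q ⊆ ttIdealGen (insert u Q) :=
        (Set.subset_insert u Q).trans (subset_ttIdealGen _)
      rw [hQ.eq_of_subset ⟨isTTIdeal_ttIdealGen _, Set.disjoint_left.2 hdisj⟩ hle] at hu
      exact hu (subset_ttIdealGen _ (Set.mem_insert u Q))
    by_contra! hne
    obtain ⟨y₁, hy₁, hy₁S⟩ := meets a hne.1
    obtain ⟨y₂, hy₂, hy₂S⟩ := meets b hne.2
    have hQ₁₂ : Set.image2 (· ⊗ ·) (insert a Q) (insert b Q) ⊆ Q := by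
      rintro _ ⟨e₁, rfl | he₁, e₂, rfl | he₂, rfl⟩
      exacts [hab, hQ.prop.1.tensor_mem' _ he₂ _, hQ.prop.1.tensor_mem _ he₁ _,
        hQ.prop.1.tensor_mem _ he₁ _]
    exact Set.disjoint_left.1 hQ.prop.2
      (ttIdealGen_subset hQ.prop.1 hQ₁₂ (tensor_mem_ttIdealGen_image2 hD hy₁ hy₂))
      (hS _ hy₁S _ hy₂S)

end Ideals

end Pretriangulated

section TriangulatedFunctor

variable {C : Type*} [Category C] [HasZeroObject C] [Preadditive C]
  [HasShift C ℤ] [∀ n : ℤ, (shiftFunctor C n).Additive] [Pretriangulated C]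
  [MonoidalCategory C]
variable {D : Type*} [Category D] [HasZeroObject D] [Preadditive D]
  [HasShift D ℤ] [∀ n : ℤ, (shiftFunctor D n).Additive] [Pretriangulated D]
  [MonoidalCategory D]

lemma map_mor₁_whiskerRight_eq_zero [BraidedCategory D] (hD : TensorExact D) (F : C ⥤ D)
    [F.CommShift ℤ] [F.IsTriangulated] [F.Monoidal] {T : Triangle C} (hT : T ∈ distTriang C)
    {c : C} {r : c ⊗ T.obj₃ ⟶ c ⊗ T.obj₂} (hr : c ◁ T.mor₂ ≫ r = 𝟙 _) :
    F.map T.mor₁ ▷ F.obj c = 0 := by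
  have h : F.obj c ◁ F.map T.mor₁ = 0 := whiskerLeft_mor₁_eq_zero hD
    (F.map_distinguished T hT) (F.obj c) _ (whiskerLeft_map_retraction F hr)
  rw [← cancel_mono (β_ _ _).hom, BraidedCategory.braiding_naturality_left, h, comp_zero,
    zero_comp]

lemma exists_mem_ttIdealGen_singleton_of_mem_ttIdealGen_image (F : C ⥤ D) {P : Set C}
    (hP : IsTTIdeal P) {y : D} (hy : y ∈ ttIdealGen (F.obj '' P)) :
    ∃ c ∈ P, y ∈ ttIdealGen {F.obj c} := by
  have hU : IsTTIdeal (⋃₀ ((fun c => ttIdealGen {F.obj c}) '' P)) := by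
    refine isTTIdeal_sUnion ⟨_, 0, hP.zero_mem, rfl⟩ ?_ ?_
    · rintro _ ⟨c₁, h₁, rfl⟩ _ ⟨c₂, h₂, rfl⟩
      refine ⟨_, ⟨c₁ ⊞ c₂, hP.biprod_mem h₁ h₂, rfl⟩, ?_, ?_⟩
      · exact ttIdealGen_singleton_subset_of_retract (F.map biprod.inl) (F.map biprod.fst)
          (by rw [← F.map_comp, biprod.inl_fst, F.map_id])
      · exact ttIdealGen_singleton_subset_of_retract (F.map biprod.inr) (F.map biprod.snd)
          (by rw [← F.map_comp, biprod.inr_snd, F.map_id])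
    · rintro _ ⟨c, -, rfl⟩
      exact isTTIdeal_ttIdealGen _
  obtain ⟨_, ⟨c, hc, rfl⟩, hyc⟩ := ttIdealGen_subset hU
    (by rintro _ ⟨c, hc, rfl⟩; exact ⟨_, ⟨c, hc, rfl⟩, subset_ttIdealGen _ rfl⟩) hy
  exact ⟨c, hc, hyc⟩

end TriangulatedFunctor

end TT


variable {K : Type u} [Category.{v} K] [HasZeroObject K] [Preadditive K]
  [HasShift K ℤ] [∀ n : ℤ, (shiftFunctor K n).Additive] [Pretriangulated K]
  [MonoidalCategory K] [SymmetricCategory K] [EssentiallySmall.{v} K]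
variable {L : Type u'} [Category.{v'} L] [HasZeroObject L] [Preadditive L]
  [HasShift L ℤ] [∀ n : ℤ, (shiftFunctor L n).Additive] [Pretriangulated L]
  [MonoidalCategory L] [SymmetricCategory L] [EssentiallySmall.{v'} L]

theorem mem_image_of_key_condition_general
    (hL : TensorExact L)
    (F : K ⥤ L) [F.CommShift ℤ] [F.IsTriangulated] [F.Monoidal]
    (d : K → K) (η : ∀ x : K, 𝟙_ K ⟶ d x ⊗ x) (ε : ∀ x : K, x ⊗ d x ⟶ 𝟙_ K)
    (hpair₁ : ∀ x : K,
      x ◁ η x ≫ (α_ x (d x) x).inv ≫ ε x ▷ x = (ρ_ x).hom ≫ (λ_ x).inv)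
    (w : K → K) (ξ : ∀ x : K, w x ⟶ 𝟙_ K) (ζ : ∀ x : K, d x ⊗ x ⟶ (w x)⟦(1:ℤ)⟧)
    (htri : ∀ x : K, Triangle.mk (ξ x) (η x) (ζ x) ∈ distTriang K)
    (P : Spc K)
    (hP : ∀ x ∈ P.1, ∀ s : K, s ∉ P.1 → ∀ n : ℕ, 1 ≤ n →
      F.map (mpow (ξ x) n ▷ s) ≠ 0) :
    ∃ Q : Spc L, {a : K | F.obj a ∈ Q.1} = P.1 := by
  let S : Set L := {y | ∃ s ∉ P.1, Nonempty (y ≅ F.obj s)}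
  have hS₁ : 𝟙_ L ∈ S := ⟨𝟙_ K, P.2.tensorUnit_notMem, ⟨Functor.Monoidal.εIso F⟩⟩
  have hS : ∀ a ∈ S, ∀ b ∈ S, a ⊗ b ∈ S := by
    rintro a ⟨s, hs, ⟨e⟩⟩ b ⟨t, ht, ⟨e'⟩⟩
    exact ⟨s ⊗ t, fun hst => (P.2.mem_or_mem s t hst).elim hs ht,
      ⟨tensorIso e e' ≪≫ Functor.Monoidal.μIso F s t⟩⟩
  have hdisj : Disjoint (ttIdealGen (F.obj '' P.1)) S := by
    refine Set.disjoint_left.2 fun y hy ⟨s, hs, ⟨e⟩⟩ => ?_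
    obtain ⟨c, hc, hyc⟩ :=
      exists_mem_ttIdealGen_singleton_of_mem_ttIdealGen_image F P.2.toIsTTIdeal hy
    have hN := isTTIdeal_nilpotenceIdeal hL (F.map (ξ c))
    have hFc : F.obj c ∈ nilpotenceIdeal (F.map (ξ c)) :=
      mem_nilpotenceIdeal_of_whiskerRight_eq_zero <| map_mor₁_whiskerRight_eq_zero hL F
        (htri c) (whiskerLeft_coevaluation_comp_retraction (hpair₁ c))
    obtain ⟨n, hn⟩ := hN.mem_of_iso e.symm
      (ttIdealGen_subset hN (Set.singleton_subset_iff.2 hFc) hyc)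
    exact hP c hc s hs (n + 1) (Nat.le_add_left 1 n) (map_whiskerRight_mpow_eq_zero F _ _ _ hn)
  obtain ⟨Q, hJQ, hQ⟩ := exists_maximal_disjoint (isTTIdeal_ttIdealGen _) hdisj
  refine ⟨⟨Q, isPrimeTTIdeal_of_maximal_disjoint hL hS₁ hS hQ⟩, Set.Subset.antisymm ?_ ?_⟩
  · intro a ha
    by_contra hna
    exact Set.disjoint_left.1 hQ.prop.2 ha ⟨a, hna, ⟨Iso.refl _⟩⟩
  · exact fun a ha => hJQ (subset_ttIdealGen _ ⟨a, ha, rfl⟩)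

/-- **Lemma (Balmer, key lemma).** Let `K`, `L` be essentially small tt-categories with
`K` rigid (every `x` is given a dual `d x` with coevaluation `η x` and evaluation `ε x`
satisfying the triangle identities of an exact pairing), let `F : K ⥤ L` be a
tt-functor, and for every `x` choose a distinguished triangle
`w x ⟶ 𝟙 ⟶ d x ⊗ x ⟶ Σ (w x)` over the coevaluation `η x`, with fiber `ξ x : w x ⟶ 𝟙`.
If a prime `P ∈ Spc K` satisfies: for all `x ∈ P`, `s ∉ P` and `n ≥ 1` one has
`F((ξ x)^⊗n ⊗ s) ≠ 0`, then `P` lies in the image of `φ = Spc F`, i.e. `P = F⁻¹(Q)` for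
some `Q ∈ Spc L`. -/
theorem mem_image_of_key_condition
    (hK : TensorExact K) (hL : TensorExact L)
    (F : K ⥤ L) [F.CommShift ℤ] [F.IsTriangulated] [F.Monoidal]
    (d : K → K) (η : ∀ x : K, 𝟙_ K ⟶ d x ⊗ x) (ε : ∀ x : K, x ⊗ d x ⟶ 𝟙_ K)
    (hpair₁ : ∀ x : K,
      x ◁ η x ≫ (α_ x (d x) x).inv ≫ ε x ▷ x = (ρ_ x).hom ≫ (λ_ x).inv)
    (hpair₂ : ∀ x : K,
      η x ▷ d x ≫ (α_ (d x) x (d x)).hom ≫ d x ◁ ε x = (λ_ (d x)).hom ≫ (ρ_ (d x)).inv)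
    (w : K → K) (ξ : ∀ x : K, w x ⟶ 𝟙_ K) (ζ : ∀ x : K, d x ⊗ x ⟶ (w x)⟦(1:ℤ)⟧)
    (htri : ∀ x : K, Triangle.mk (ξ x) (η x) (ζ x) ∈ distTriang K)
    (P : Spc K)
    (hP : ∀ x ∈ P.1, ∀ s : K, s ∉ P.1 → ∀ n : ℕ, 1 ≤ n →
      F.map (mpow (ξ x) n ▷ s) ≠ 0) :
    ∃ Q : Spc L, {a : K | F.obj a ∈ Q.1} = P.1 :=
  mem_image_of_key_condition_general hL F d η ε hpair₁ w ξ ζ htri P hP
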